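/- For every non-negative integer n, the harmonic number satisfies H_{n+1} = (1/n!) · Σ_{k=0}^{n} (-1)^k · [n+1, k+1] · B_k, where [n+1, k+1] is the unsigned Stirling number of the first kind and B_k is the k-th Bernoulli number (with the convention B_1 = -1/2). Equivalently, this is the specialization p = 1 of the identity H_{n+1}^{(p)} = (1/n!) Σ_{j=0}^{n} [n+1, j+1] B_j^{(p)}, using that B_k^{(1)} = (-1)^k B_k. -/

import Mathlib

/-- Unsigned Stirling numbers of the first kind. -/
def stirlingFirst : ℕ → ℕ → ℕ
  | 0, 0 => 1
  | 0, _ + 1 => 0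
  | _ + 1, 0 => 0
  | n + 1, k + 1 => n * stirlingFirst n (k + 1) + stirlingFirst n k

/-- Harmonic number `H_n = ∑_{k=1}^n 1/k`. -/
def harmonicNumber (n : ℕ) : ℚ := ∑ k ∈ Finset.Icc 1 n, (1 : ℚ) / k

/-!
Since `x (x + 1) ⋯ (x + n) = ∑ₖ [n + 1, k] xᵏ`, the polynomial `R(x) = (x + 1) ⋯ (x + n)` has
coefficients `[n + 1, k + 1]`. By Faulhaber's formula, the polynomial `N ↦ ∑_{m=1}^N p(m)` has
linear coefficient `∑ₖ pₖ B'ₖ`, where `B'ₖ = (-1)^k Bₖ`. For `p = R` the sum telescopes to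
`((N + 1) ⋯ (N + n + 1) - (n + 1)!) / (n + 1)`, whose linear coefficient is `1 / (n + 1)` times
the derivative of `x (x + 1) ⋯ (x + n)` at `1`, namely `(n + 1)! H_{n+1}`.
-/

theorem stirlingFirst_eq_nat_stirlingFirst : ∀ n k, stirlingFirst n k = Nat.stirlingFirst n k
  | 0, 0 | 0, _ + 1 | _ + 1, 0 => rfl
  | n + 1, k + 1 => by
    rw [stirlingFirst, Nat.stirlingFirst_succ_succ, stirlingFirst_eq_nat_stirlingFirst n (k + 1),
      stirlingFirst_eq_nat_stirlingFirst n k]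

theorem harmonicNumber_eq_harmonic (n : ℕ) : harmonicNumber n = harmonic n := by
  rw [harmonicNumber, harmonic, ← Finset.Ico_add_one_right_eq_Icc, Finset.sum_Ico_eq_sum_range]
  simp [add_comm]

section

open Polynomial Finset

theorem coeff_ascPochhammer {S : Type*} [Semiring S] (n k : ℕ) :
    (ascPochhammer S n).coeff k = Nat.stirlingFirst n k := by
  induction n generalizing k with
  | zero => cases k <;> simp [coeff_one]
  | succ n ih =>
    cases k with
    | zero => simp [ascPochhammer_succ_left]
    | succ k =>
      rw [ascPochhammer_succ_right, mul_add, coeff_add, coeff_mul_X, ← C_eq_natCast, coeff_mul_C,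
        ih, ih, Nat.stirlingFirst_succ_succ, Nat.cast_add, Nat.cast_mul, Nat.cast_comm, add_comm]

theorem coeff_ascPochhammer_comp_X_add_one {S : Type*} [Semiring S] (n k : ℕ) :
    ((ascPochhammer S n).comp (X + 1)).coeff k = Nat.stirlingFirst (n + 1) (k + 1) := by
  rw [← coeff_ascPochhammer, ascPochhammer_succ_left, coeff_X_mul]

theorem derivative_ascPochhammer_eval_one (n : ℕ) :
    (derivative (ascPochhammer ℚ n)).eval 1 = n.factorial * harmonic n := by
  induction n with
  | zero => simp
  | succ n ih =>
    rw [ascPochhammer_succ_right, derivative_mul, eval_add, eval_mul, eval_mul, ih,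
      ascPochhammer_eval_one, harmonic_succ]
    simp only [derivative_add, derivative_X, derivative_natCast, add_zero, eval_add, eval_X,
      eval_natCast, eval_one, Nat.factorial_succ]
    push_cast
    field_simp
    ring

theorem natDegree_ascPochhammer_comp_X_add_one {S : Type*} [Semiring S] [NoZeroDivisors S]
    [Nontrivial S] (n : ℕ) :
    ((ascPochhammer S n).comp (X + 1)).natDegree = n := by
  rw [natDegree_comp, ascPochhammer_natDegree, ← C_1, natDegree_X_add_C, mul_one]

theorem sum_Ico_eval_ascPochhammer_comp_X_add_one {R : Type*} [CommRing R] (n N : ℕ) :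
    (n + 1) * ∑ m ∈ Ico 1 (N + 1), ((ascPochhammer R n).comp (X + 1)).eval (m : R) =
      (ascPochhammer R (n + 1)).eval ((N : R) + 1) - (ascPochhammer R (n + 1)).eval 1 := by
  have hdiff : ∀ x : R, (n + 1) * ((ascPochhammer R n).comp (X + 1)).eval x =
      (ascPochhammer R (n + 1)).eval (x + 1) - (ascPochhammer R (n + 1)).eval x := by
    intro x
    have := congrArg (eval x) (ascPochhammer_succ_comp_X_add_one R n)
    simp only [eval_comp, eval_add, eval_X, eval_one, nsmul_eq_mul, eval_mul, eval_natCast]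
      at this ⊢
    rw [this, add_comm x]
    push_cast
    ring
  induction N with
  | zero => simp
  | succ N ih =>
    rw [sum_Ico_succ_top (by omega), mul_add, ih, hdiff]
    push_cast
    ring

noncomputable def powerSumPoly (k : ℕ) : ℚ[X] :=
  ∑ i ∈ range (k + 1), C (bernoulli' i * (k + 1).choose i / (k + 1)) * X ^ (k + 1 - i)

theorem eval_powerSumPoly (k N : ℕ) :
    (powerSumPoly k).eval (N : ℚ) = ∑ m ∈ Ico 1 (N + 1), (m : ℚ) ^ k := by
  rw [sum_Ico_pow, powerSumPoly, eval_finsetSum]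
  refine sum_congr rfl fun i _ => ?_
  simp only [eval_mul, eval_C, eval_pow, eval_X]
  ring

theorem coeff_one_powerSumPoly (k : ℕ) : (powerSumPoly k).coeff 1 = bernoulli' k := by
  rw [powerSumPoly, finsetSum_coeff, sum_eq_single_of_mem k (self_mem_range_succ k)]
  · rw [coeff_C_mul_X_pow, Nat.add_sub_cancel_left, if_pos rfl, Nat.choose_succ_self_right]
    push_cast
    field_simp
  · intro i hi hik
    rw [coeff_C_mul_X_pow, if_neg (by simp at hi; omega)]

noncomputable def partialSumPoly (p : ℚ[X]) : ℚ[X] := p.sum fun k a => C a * powerSumPoly k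

theorem eval_partialSumPoly (p : ℚ[X]) (N : ℕ) :
    (partialSumPoly p).eval (N : ℚ) = ∑ m ∈ Ico 1 (N + 1), p.eval (m : ℚ) := by
  simp_rw [eval_eq_sum (p := p), Polynomial.sum, partialSumPoly, Polynomial.sum, eval_finsetSum,
    eval_mul, eval_C, eval_powerSumPoly, mul_sum]
  exact sum_comm

theorem coeff_one_eq_sum_bernoulli' {p Q : ℚ[X]}
    (hQ : ∀ N : ℕ, Q.eval (N : ℚ) = ∑ m ∈ Ico 1 (N + 1), p.eval (m : ℚ)) :
    Q.coeff 1 = p.sum fun k a => a * bernoulli' k := by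
  have hQp : Q = partialSumPoly p := by
    refine eq_of_infinite_eval_eq _ _ (Set.infinite_of_injective_forall_mem
      Nat.cast_injective fun N => ?_)
    rw [Set.mem_ofPred_eq, hQ, eval_partialSumPoly]
  simp only [hQp, partialSumPoly, Polynomial.sum, finsetSum_coeff, coeff_C_mul,
    coeff_one_powerSumPoly]

theorem sum_stirlingFirst_mul_bernoulli' (n : ℕ) :
    ∑ k ∈ range (n + 1), (Nat.stirlingFirst (n + 1) (k + 1) : ℚ) * bernoulli' k =
      n.factorial * harmonic (n + 1) := by
  set P := ascPochhammer ℚ (n + 1)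
  have hn : (n + 1 : ℚ) ≠ 0 := n.cast_add_one_ne_zero
  have hQ : ∀ N : ℕ, (C ((n + 1 : ℚ)⁻¹) * (taylor 1 P - C (P.eval 1))).eval (N : ℚ) =
      ∑ m ∈ Ico 1 (N + 1), ((ascPochhammer ℚ n).comp (X + 1)).eval (m : ℚ) := by
    intro N
    rw [eval_mul, eval_C, eval_sub, taylor_eval, eval_C,
      ← sum_Ico_eval_ascPochhammer_comp_X_add_one, inv_mul_cancel_left₀ hn]
  have hcoeff := coeff_one_eq_sum_bernoulli' hQ
  rw [coeff_C_mul, coeff_sub, taylor_coeff_one, coeff_C, if_neg one_ne_zero, sub_zero,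
    derivative_ascPochhammer_eval_one, sum_over_range' _ (fun _ => zero_mul _) (n + 1)
      (by rw [natDegree_ascPochhammer_comp_X_add_one]; exact n.lt_succ_self)] at hcoeff
  simp_rw [coeff_ascPochhammer_comp_X_add_one] at hcoeff
  rw [← hcoeff, Nat.factorial_succ]
  push_cast
  field_simp

end

theorem harmonic_eq_sum_stirlingFirst_bernoulli (n : ℕ) :
    harmonicNumber (n + 1) =
      (1 / (Nat.factorial n : ℚ)) *
        ∑ k ∈ Finset.range (n + 1),
          (-1 : ℚ) ^ k * (stirlingFirst (n + 1) (k + 1) : ℚ) * bernoulli k := by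
  have hsum : ∑ k ∈ Finset.range (n + 1),
      (-1 : ℚ) ^ k * (stirlingFirst (n + 1) (k + 1) : ℚ) * bernoulli k =
        ∑ k ∈ Finset.range (n + 1),
          (Nat.stirlingFirst (n + 1) (k + 1) : ℚ) * bernoulli' k := by
    refine Finset.sum_congr rfl fun k _ => ?_
    rw [stirlingFirst_eq_nat_stirlingFirst, bernoulli'_eq_bernoulli]
    ring
  rw [hsum, sum_stirlingFirst_mul_bernoulli', harmonicNumber_eq_harmonic]
  field_simp
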